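/- arXiv:1102.3437 — 4 statements merged into one kernel-verified Lean document; each statement's English description precedes it below -/
import Mathlib

section
/- Let N ≥ 1, 1 ≤ p, q < ∞ and θ > 0 with θ ≤ q. Let F : ℝ → ℝ be a continuous function such that F(0) = 0, F is differentiable at 0, and there exists α ≠ 0 with F(t)|t|^{−θ} → α as |t| → ∞. If f belongs to the Orlicz space L^q_p(ℝ^N), then F ∘ f belongs to the Orlicz space L^{q/θ}_p(ℝ^N). -/
/-!
Since `F(t) = O(t)` at `0`, the part of `F ∘ f` where `|f|` is small is dominated by a multiple of
the small part of `f`, hence lies in `L^p`; since `F(t) = O(|t|^θ)` at infinity, the part where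
`|f| ≥ δ` is dominated by a multiple of `|f|^θ`, hence lies in `L^{q/θ}`. All that is left lives on a
set `{c ≤ |f|}` with `c > 0`, which has finite measure by Chebyshev's inequality applied to both
parts of `f`, and there `F ∘ f` is bounded.
-/

open MeasureTheory Set Filter Asymptotics Topology ENNReal

variable {X : Type*} [MeasurableSpace X] {μ : Measure X}

def MemOrlicz (f : X → ℝ) (p q : ℝ≥0∞) (δ : ℝ) (μ : Measure X) : Prop :=
  MemLp ({x | |f x| ≤ δ}.indicator f) p μ ∧ MemLp ({x | δ ≤ |f x|}.indicator f) q μ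

theorem MemOrlicz.measure_le_abs_lt_top {f : X → ℝ} {p q : ℝ≥0∞} {δ c : ℝ}
    (hf : MemOrlicz f p q δ μ) (hp₀ : p ≠ 0) (hp : p ≠ ∞) (hq₀ : q ≠ 0) (hq : q ≠ ∞)
    (hδ : 0 < δ) (hc : 0 < c) : μ {x | c ≤ |f x|} < ∞ := by
  have hsub : {x | c ≤ |f x|} ⊆ {x | (min c δ).toNNReal ≤ ‖{x | |f x| ≤ δ}.indicator f x‖₊} ∪
      {x | δ.toNNReal ≤ ‖{x | δ ≤ |f x|}.indicator f x‖₊} := by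
    intro x (hx : c ≤ |f x|)
    simp only [mem_union, mem_ofPred_eq, Real.toNNReal_le_iff_le_coe, coe_nnnorm,
      Real.norm_eq_abs]
    rcases le_total (|f x|) δ with hxδ | hxδ
    · left
      rw [indicator_of_mem (show x ∈ {x | |f x| ≤ δ} from hxδ)]
      exact (min_le_left _ _).trans hx
    · right
      rwa [indicator_of_mem (show x ∈ {x | δ ≤ |f x|} from hxδ)]
  refine (measure_mono hsub).trans_lt ((measure_union_le _ _).trans_lt (add_lt_top.mpr ⟨?_, ?_⟩))
  · exact hf.1.meas_ge_lt_top hp₀ hp (Real.toNNReal_pos.mpr (lt_min hc hδ)).ne'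
  · exact hf.2.meas_ge_lt_top hq₀ hq (Real.toNNReal_pos.mpr hδ).ne'

theorem isBigO_rpow_cocompact_of_tendsto {F : ℝ → ℝ} {θ α : ℝ}
    (hlim : Tendsto (fun t => F t * |t| ^ (-θ)) (cocompact ℝ) (𝓝 α)) :
    F =O[cocompact ℝ] fun t => |t| ^ θ := by
  have hne : ∀ᶠ t in cocompact ℝ, t ≠ 0 := isCompact_singleton.compl_mem_cocompact
  refine ((hlim.isBigO_one ℝ).mul (isBigO_refl (fun t => |t| ^ θ) _)).congr' ?_ (by simp)
  filter_upwards [hne] with t ht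
  rw [mul_assoc, ← Real.rpow_add (abs_pos.mpr ht), neg_add_cancel, Real.rpow_zero, mul_one]

theorem exists_abs_le_mul_rpow_of_isBigO_cocompact {G : ℝ → ℝ} {θ M : ℝ} (hθ : 0 ≤ θ)
    (hM : 0 < M) (hG : Continuous G) (hGinf : G =O[cocompact ℝ] fun t => |t| ^ θ) :
    ∃ C, 0 ≤ C ∧ ∀ t, M ≤ |t| → |G t| ≤ C * |t| ^ θ := by
  obtain ⟨C₀, hC₀, hC₀G⟩ := hGinf.exists_nonneg
  have hev : ∀ᶠ t in comap abs atTop, |G t| ≤ C₀ * |t| ^ θ := by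
    rw [comap_abs_atTop, ← cocompact_eq_atBot_atTop]
    filter_upwards [hC₀G.bound] with t ht
    simpa [abs_of_nonneg (Real.rpow_nonneg (abs_nonneg t) θ)] using ht
  obtain ⟨R, hR⟩ := eventually_atTop.mp (eventually_comap.mp hev)
  obtain ⟨B, hB⟩ := (isCompact_Icc (a := -R) (b := R)).exists_bound_of_continuousOn
    hG.continuousOn
  have hMθ : 0 < M ^ θ := Real.rpow_pos_of_pos hM θ
  refine ⟨max C₀ (B / M ^ θ), le_max_of_le_left hC₀, fun t ht => ?_⟩
  have htθ : M ^ θ ≤ |t| ^ θ := Real.rpow_le_rpow hM.le ht hθ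
  rcases le_total R |t| with hRt | htR
  · exact (hR _ hRt t rfl).trans (by gcongr; exact le_max_left _ _)
  · -- on the compact range `M ≤ |t| ≤ R`, `G` is bounded and `|t| ^ θ ≥ M ^ θ > 0`
    have hGB : |G t| ≤ B := hB t (mem_Icc.mpr (abs_le.mp htR))
    calc |G t| ≤ B / M ^ θ * M ^ θ := by rwa [div_mul_cancel₀ _ hMθ.ne']
      _ ≤ max C₀ (B / M ^ θ) * |t| ^ θ :=
        mul_le_mul (le_max_right _ _) htθ hMθ.le (le_max_of_le_left hC₀)

theorem memLp_indicator_abs_le_comp {G : ℝ → ℝ} {f : X → ℝ} {p : ℝ≥0∞} {δ : ℝ} (hδ : 0 < δ)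
    (hG : Measurable G) (hG₀ : G =O[𝓝 0] id) (hf : Measurable f)
    (hsmall : MemLp ({x | |f x| ≤ δ}.indicator f) p μ)
    (hfin : ∀ c > 0, μ {x | c ≤ |f x|} < ∞) :
    MemLp ({x | |G (f x)| ≤ δ}.indicator fun x => G (f x)) p μ := by
  obtain ⟨C, hC, hCG⟩ := hG₀.exists_nonneg
  obtain ⟨ε, hε, hεG⟩ := Metric.eventually_nhds_iff.mp hCG.bound
  set η := min ε δ
  set S := {x | η ≤ |f x|}
  have hS : MeasurableSet S := measurableSet_le measurable_const hf.abs
  have hdom : MemLp (fun x => C * ‖{x | |f x| ≤ δ}.indicator f x‖ + S.indicator (fun _ => δ) x)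
      p μ :=
    (hsmall.norm.const_mul C).add
      (memLp_indicator_const p hS δ (Or.inr (hfin η (lt_min hε hδ)).ne))
  refine hdom.of_le ((hG.comp hf).indicator
    (measurableSet_le (hG.comp hf).abs measurable_const)).aestronglyMeasurable
    (Eventually.of_forall fun x => ?_)
  have hSδ : 0 ≤ S.indicator (fun _ => δ) x := indicator_nonneg (fun _ _ => hδ.le) x
  simp only [Real.norm_eq_abs] at hεG ⊢
  rw [abs_of_nonneg (add_nonneg (by positivity) hSδ)]
  by_cases hGx : |G (f x)| ≤ δ
  · rw [indicator_of_mem (show x ∈ {x | |G (f x)| ≤ δ} from hGx)]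
    by_cases hx : x ∈ S
    · rw [indicator_of_mem hx]
      linarith [mul_nonneg hC (abs_nonneg ({x | |f x| ≤ δ}.indicator f x))]
    · have hxη : |f x| < η := not_le.mp hx
      rw [indicator_of_mem (show x ∈ {x | |f x| ≤ δ} from hxη.le.trans (min_le_right _ _))]
      have := hεG (show dist (f x) 0 < ε by
        simpa [Real.dist_eq] using hxη.trans_le (min_le_left _ _))
      simp only [id] at this
      linarith
  · rw [indicator_of_notMem (show x ∉ {x | |G (f x)| ≤ δ} from hGx), abs_zero]
    positivity

theorem memLp_indicator_le_abs_comp {G : ℝ → ℝ} {f : X → ℝ} {q : ℝ≥0∞} {δ θ : ℝ}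
    (hδ : 0 < δ) (hθ : 0 < θ) (hG : Continuous G) (hG₀ : G 0 = 0)
    (hGinf : G =O[cocompact ℝ] fun t => |t| ^ θ) (hf : Measurable f)
    (hlarge : MemLp ({x | δ ≤ |f x|}.indicator f) q μ)
    (hfin : ∀ c > 0, μ {x | c ≤ |f x|} < ∞) :
    MemLp ({x | δ ≤ |G (f x)|}.indicator fun x => G (f x)) (q / ENNReal.ofReal θ) μ := by
  obtain ⟨ρ, hρ, hρG⟩ := Metric.continuousAt_iff.mp hG.continuousAt δ hδ
  obtain ⟨C, hC, hCG⟩ := exists_abs_le_mul_rpow_of_isBigO_cocompact hθ.le hδ hG hGinf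
  obtain ⟨B, hB⟩ := (isCompact_Icc (a := -δ) (b := δ)).exists_bound_of_continuousOn
    hG.continuousOn
  set S := {x | ρ ≤ |f x|}
  have hS : MeasurableSet S := measurableSet_le measurable_const hf.abs
  have hdom : MemLp (fun x => S.indicator (fun _ => B) x +
      C * ‖{x | δ ≤ |f x|}.indicator f x‖ ^ θ) (q / ENNReal.ofReal θ) μ := by
    refine (memLp_indicator_const _ hS B (Or.inr (hfin ρ hρ).ne)).add ?_
    simpa only [ENNReal.toReal_ofReal hθ.le] using
      (hlarge.norm_rpow_div (ENNReal.ofReal θ)).const_mul C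
  refine hdom.of_le ((hG.measurable.comp hf).indicator
    (measurableSet_le measurable_const (hG.measurable.comp hf).abs)).aestronglyMeasurable
    (Eventually.of_forall fun x => ?_)
  have hB₀ : 0 ≤ B := (norm_nonneg _).trans (hB 0 (by simp [hδ.le]))
  have hSB : 0 ≤ S.indicator (fun _ => B) x := indicator_nonneg (fun _ _ => hB₀) x
  have hCθ : 0 ≤ C * |{x | δ ≤ |f x|}.indicator f x| ^ θ := by positivity
  simp only [Real.norm_eq_abs]
  rw [abs_of_nonneg (add_nonneg hSB hCθ)]
  by_cases hGx : δ ≤ |G (f x)|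
  · rw [indicator_of_mem (show x ∈ {x | δ ≤ |G (f x)|} from hGx)]
    have hxS : x ∈ S := by
      by_contra hxS
      have := hρG (show dist (f x) 0 < ρ by simpa [Real.dist_eq] using not_le.mp hxS)
      rw [Real.dist_eq, hG₀, sub_zero] at this
      linarith
    rw [indicator_of_mem hxS]
    rcases le_total δ |f x| with hxδ | hxδ
    · rw [indicator_of_mem (show x ∈ {x | δ ≤ |f x|} from hxδ)]
      linarith [hCG _ hxδ]
    · linarith [show |G (f x)| ≤ B from hB _ (mem_Icc.mpr (abs_le.mp hxδ))]
  · rw [indicator_of_notMem (show x ∉ {x | δ ≤ |G (f x)|} from hGx), abs_zero]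
    exact add_nonneg hSB hCθ

theorem MemOrlicz.comp {G : ℝ → ℝ} {f : X → ℝ} {p q : ℝ≥0∞} {δ θ : ℝ} (hδ : 0 < δ)
    (hθ : 0 < θ) (hG : Continuous G) (hG₀ : G =O[𝓝 0] id)
    (hGinf : G =O[cocompact ℝ] fun t => |t| ^ θ) (hf : Measurable f)
    (hfO : MemOrlicz f p q δ μ) (hfin : ∀ c > 0, μ {x | c ≤ |f x|} < ∞) :
    MemOrlicz (G ∘ f) p (q / ENNReal.ofReal θ) δ μ :=
  ⟨memLp_indicator_abs_le_comp hδ hG.measurable hG₀ hf hfO.1 hfin,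
    memLp_indicator_le_abs_comp hδ hθ hG (by simpa using hG₀.eq_zero_imp.self_of_nhds) hGinf
      hf hfO.2 hfin⟩

theorem orlicz_comp_general (N : ℕ) (p q θ : ℝ) (hp : 1 ≤ p) (hq : 1 ≤ q)
    (hθ : 0 < θ) (δ : ℝ) (hδ : 0 < δ)
    (F : ℝ → ℝ) (hFc : Continuous F) (hF0 : F 0 = 0) (hFd : DifferentiableAt ℝ F 0)
    (α : ℝ)
    (hlim : Tendsto (fun t => F t * |t| ^ (-θ)) (cocompact ℝ) (nhds α))
    (f : (Fin N → ℝ) → ℝ) (hf : Measurable f)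
    (h₁ : MemLp ({x | |f x| ≤ δ}.indicator f) (ENNReal.ofReal p) volume)
    (h₂ : MemLp ({x | δ ≤ |f x|}.indicator f) (ENNReal.ofReal q) volume) :
    MemLp ({x | |F (f x)| ≤ δ}.indicator (fun x => F (f x))) (ENNReal.ofReal p) volume ∧
    MemLp ({x | δ ≤ |F (f x)|}.indicator (fun x => F (f x))) (ENNReal.ofReal (q / θ)) volume := by
  have hfO : MemOrlicz f (ENNReal.ofReal p) (ENNReal.ofReal q) δ volume := ⟨h₁, h₂⟩
  have hfin : ∀ c > 0, volume {x | c ≤ |f x|} < ∞ := fun c hc =>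
    hfO.measure_le_abs_lt_top (ofReal_pos.mpr (by linarith)).ne' ofReal_ne_top
      (ofReal_pos.mpr (by linarith)).ne' ofReal_ne_top hδ hc
  have hF₀ : F =O[𝓝 0] id := by
    have h := hFd.isBigO_sub
    simp only [hF0, sub_zero] at h
    exact h
  rw [ENNReal.ofReal_div_of_pos hθ]
  exact hfO.comp hδ hθ hFc hF₀ (isBigO_rpow_cocompact_of_tendsto hlim) hf hfin

/-- Composition property of Orlicz spaces: if `F` is continuous, `F(0) = 0`, `F` is
differentiable at `0` and `F(t)|t|^{-θ} → α ≠ 0` as `|t| → ∞`, then `f ∈ L^q_p(ℝ^N)`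
implies `F ∘ f ∈ L^{q/θ}_p(ℝ^N)`. -/
theorem orlicz_comp (N : ℕ) (hN : 1 ≤ N) (p q θ : ℝ) (hp : 1 ≤ p) (hq : 1 ≤ q)
    (hθ : 0 < θ) (hθq : θ ≤ q) (δ : ℝ) (hδ : 0 < δ)
    (F : ℝ → ℝ) (hFc : Continuous F) (hF0 : F 0 = 0) (hFd : DifferentiableAt ℝ F 0)
    (α : ℝ) (hα : α ≠ 0)
    (hlim : Tendsto (fun t => F t * |t| ^ (-θ)) (cocompact ℝ) (nhds α))
    (f : (Fin N → ℝ) → ℝ) (hf : Measurable f)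
    (h₁ : MemLp ({x | |f x| ≤ δ}.indicator f) (ENNReal.ofReal p) volume)
    (h₂ : MemLp ({x | δ ≤ |f x|}.indicator f) (ENNReal.ofReal q) volume) :
    MemLp ({x | |F (f x)| ≤ δ}.indicator (fun x => F (f x))) (ENNReal.ofReal p) volume ∧
    MemLp ({x | δ ≤ |F (f x)|}.indicator (fun x => F (f x))) (ENNReal.ofReal (q / θ)) volume :=
  orlicz_comp_general N p q θ hp hq hθ δ hδ F hFc hF0 hFd α hlim f hf h₁ h₂
end

section
/- Let N ≥ 1, a > 0 and γ > 1, and let Π(s) = (a/(γ−1))(s^γ − γs) for s ≥ 0, so that Π(s) − Π(1) = (a/(γ−1))(s^γ − γs + γ − 1). For every measurable function ρ : ℝ^N → [0, ∞), the function x ↦ Π(ρ(x)) − Π(1) belongs to L¹(ℝ^N) if and only if (ρ − 1) belongs to the Orlicz space L^γ_2(ℝ^N), i.e. (ρ − 1)·1_{{|ρ − 1| ≤ δ}} ∈ L²(ℝ^N) and (ρ − 1)·1_{{|ρ − 1| ≥ δ}} ∈ L^γ(ℝ^N). -/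
/-!
Let `F = bregmanRpow γ`. It is convex with `F 1 = F' 1 = 0` and `F'' s = γ (γ - 1) s ^ (γ - 2)`,
so on a compact interval around `1` inside `(0, ∞)` it is comparable to `(s - 1) ^ 2`. Near
`s = 0` both `F` and the Orlicz weight are bounded above and away from zero, and for `s ≥ 1 + δ`
superadditivity of `x ↦ x ^ γ` together with the at least linear growth of the convex `F` gives
`F s ≍ (s - 1) ^ γ`. Nonnegative functions that are comparable on a set are integrable on it
together, and `{|ρ - 1| ≤ δ}`, `{δ ≤ |ρ - 1|}` cover the space.
-/

open MeasureTheory Set Filter Asymptotics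

theorem add_deriv_mul_add_sq_le_of_le_deriv2 {f f' f'' : ℝ → ℝ} {D : Set ℝ} {x₀ x m : ℝ}
    (hD : Convex ℝ D) (hx₀ : x₀ ∈ interior D) (hx : x ∈ D)
    (hf : ∀ y ∈ D, HasDerivAt f (f' y) y) (hf' : ∀ y ∈ D, HasDerivAt f' (f'' y) y)
    (hm : ∀ y ∈ D, m ≤ f'' y) :
    f x₀ + f' x₀ * (x - x₀) + m / 2 * (x - x₀) ^ 2 ≤ f x := by
  -- `f` minus this quadratic is convex with a critical point at `x₀`.
  set q : ℝ → ℝ := fun y ↦ f x₀ + f' x₀ * (y - x₀) + m / 2 * (y - x₀) ^ 2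
  set g : ℝ → ℝ := fun y ↦ f y - q y
  set g' : ℝ → ℝ := fun y ↦ f' y - (f' x₀ + m * (y - x₀))
  have hq : ∀ y, HasDerivAt q (f' x₀ + m * (y - x₀)) y := fun y ↦ by
    have hlin := (hasDerivAt_id' y).sub_const x₀
    refine (((hlin.const_mul (f' x₀)).const_add (f x₀)).fun_add
      ((hlin.fun_pow 2).const_mul (m / 2))).congr_deriv ?_
    ring
  have hg : ∀ y ∈ D, HasDerivAt g (g' y) y := fun y hy ↦ (hf y hy).sub (hq y)
  have hg' : ∀ y ∈ D, HasDerivAt g' (f'' y - m) y := fun y hy ↦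
    ((hf' y hy).sub ((((hasDerivAt_id' y).sub_const x₀).const_mul m).const_add (f' x₀))).congr_deriv
      (by ring)
  have hconv : ConvexOn ℝ D g :=
    convexOn_of_hasDerivWithinAt2_nonneg hD (fun y hy ↦ (hg y hy).continuousAt.continuousWithinAt)
      (fun y hy ↦ (hg y (interior_subset hy)).hasDerivWithinAt)
      (fun y hy ↦ (hg' y (interior_subset hy)).hasDerivWithinAt)
      (fun y hy ↦ sub_nonneg.2 (hm y (interior_subset hy)))
  have hmin : IsMinOn g D x₀ := by
    refine hconv.isMinOn_of_rightDeriv_eq_zero hx₀ ?_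
    rw [(hg x₀ (interior_subset hx₀)).hasDerivWithinAt.derivWithin (uniqueDiffWithinAt_Ioi x₀)]
    simp [g']
  have hgx := hmin hx
  simp only [mem_ofPred_eq, g, q, sub_self, mul_zero, add_zero, zero_pow two_ne_zero] at hgx
  linarith

theorem le_add_deriv_mul_add_sq_of_deriv2_le {f f' f'' : ℝ → ℝ} {D : Set ℝ} {x₀ x M : ℝ}
    (hD : Convex ℝ D) (hx₀ : x₀ ∈ interior D) (hx : x ∈ D)
    (hf : ∀ y ∈ D, HasDerivAt f (f' y) y) (hf' : ∀ y ∈ D, HasDerivAt f' (f'' y) y)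
    (hM : ∀ y ∈ D, f'' y ≤ M) :
    f x ≤ f x₀ + f' x₀ * (x - x₀) + M / 2 * (x - x₀) ^ 2 := by
  have hneg := add_deriv_mul_add_sq_le_of_le_deriv2 (f := -f) (f' := -f') (f'' := -f'')
    (m := -M) hD hx₀ hx (fun y hy ↦ (hf y hy).neg) (fun y hy ↦ (hf' y hy).neg)
    (fun y hy ↦ neg_le_neg (hM y hy))
  simp only [Pi.neg_apply] at hneg
  linarith

theorem isBigO_principal_of_le {α : Type*} {f g : α → ℝ} {S : Set α} {C : ℝ}
    (hf : ∀ x ∈ S, 0 ≤ f x) (hg : ∀ x ∈ S, 0 ≤ g x) (h : ∀ x ∈ S, f x ≤ C * g x) :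
    f =O[𝓟 S] g :=
  IsBigO.of_bound C <| eventually_principal.2 fun x hx ↦ by
    rw [Real.norm_of_nonneg (hf x hx), Real.norm_of_nonneg (hg x hx)]
    exact h x hx

theorem isTheta_principal_of_le {α : Type*} {f g : α → ℝ} {S : Set α} {C C' : ℝ}
    (hf : ∀ x ∈ S, 0 ≤ f x) (hg : ∀ x ∈ S, 0 ≤ g x) (hfg : ∀ x ∈ S, f x ≤ C * g x)
    (hgf : ∀ x ∈ S, g x ≤ C' * f x) : f =Θ[𝓟 S] g :=
  ⟨isBigO_principal_of_le hf hg hfg, isBigO_principal_of_le hg hf hgf⟩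

theorem Asymptotics.IsBigO.integrableOn {α E F : Type*} [MeasurableSpace α] {μ : Measure α}
    [NormedAddCommGroup E] [NormedAddCommGroup F] {f : α → E} {g : α → F} {s : Set α}
    (hs : MeasurableSet s) (h : f =O[𝓟 s] g) (hf : AEStronglyMeasurable f (μ.restrict s))
    (hg : IntegrableOn g s μ) : IntegrableOn f s μ := by
  obtain ⟨C, hC⟩ := h.bound
  exact (hg.norm.const_mul C).mono' hf ((ae_restrict_mem hs).mono fun x hx ↦ hC hx)

theorem Asymptotics.IsTheta.integrableOn_iff {α E F : Type*} [MeasurableSpace α] {μ : Measure α}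
    [NormedAddCommGroup E] [NormedAddCommGroup F] {f : α → E} {g : α → F} {s : Set α}
    (hs : MeasurableSet s) (h : f =Θ[𝓟 s] g) (hf : AEStronglyMeasurable f (μ.restrict s))
    (hg : AEStronglyMeasurable g (μ.restrict s)) : IntegrableOn f s μ ↔ IntegrableOn g s μ :=
  ⟨h.2.integrableOn hs hg, h.1.integrableOn hs hf⟩

theorem Asymptotics.IsTheta.comp_tendsto {α β E F : Type*} [Norm E] [Norm F] {f : β → E}
    {g : β → F} {l : Filter β} {l' : Filter α} {k : α → β} (h : f =Θ[l] g)
    (hk : Tendsto k l' l) : (f ∘ k) =Θ[l'] (g ∘ k) :=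
  ⟨h.1.comp_tendsto hk, h.2.comp_tendsto hk⟩

/-- The Bregman divergence of `s ↦ s ^ γ` from `1`, so that
`Π(s) - Π(1) = a / (γ - 1) * bregmanRpow γ s`. -/
noncomputable def bregmanRpow (γ s : ℝ) : ℝ := s ^ γ - γ * s + γ - 1

section bregmanRpow

variable {γ : ℝ}

@[simp]
theorem bregmanRpow_one : bregmanRpow γ 1 = 0 := by
  simp [bregmanRpow]

theorem measurable_bregmanRpow : Measurable (bregmanRpow γ) := by
  unfold bregmanRpow
  fun_prop

theorem bregmanRpow_nonneg (hγ : 1 ≤ γ) {s : ℝ} (hs : 0 ≤ s) : 0 ≤ bregmanRpow γ s := by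
  have hbern := one_add_mul_self_le_rpow_one_add (s := s - 1) (by linarith) hγ
  rw [add_sub_cancel] at hbern
  unfold bregmanRpow
  linarith

theorem bregmanRpow_pos (hγ : 1 < γ) {s : ℝ} (hs : 0 ≤ s) (hs1 : s ≠ 1) :
    0 < bregmanRpow γ s := by
  have hbern := one_add_mul_self_lt_rpow_one_add (s := s - 1) (by linarith) (sub_ne_zero.2 hs1) hγ
  rw [add_sub_cancel] at hbern
  unfold bregmanRpow
  linarith

theorem bregmanRpow_le (hγ : 0 ≤ γ) {s : ℝ} (hs0 : 0 ≤ s) (hs1 : s ≤ 1) :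
    bregmanRpow γ s ≤ γ := by
  have hpow := Real.rpow_le_one hs0 hs1 hγ
  unfold bregmanRpow
  nlinarith [mul_nonneg hγ hs0]

theorem convexOn_bregmanRpow (hγ : 1 ≤ γ) : ConvexOn ℝ (Ici 0) (bregmanRpow γ) := by
  have hconv := ((convexOn_rpow hγ).sub ((concaveOn_id (convex_Ici (0 : ℝ))).smul
    (by linarith : (0 : ℝ) ≤ γ))).add_const (γ - 1)
  refine hconv.congr fun s _ ↦ ?_
  simp only [Pi.add_apply, Pi.sub_apply, id, smul_eq_mul, bregmanRpow]
  ring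

theorem antitoneOn_bregmanRpow (hγ : 1 ≤ γ) : AntitoneOn (bregmanRpow γ) (Icc 0 1) := by
  intro x hx y hy hxy
  rcases hy.2.eq_or_lt with rfl | hy1
  · simpa using bregmanRpow_nonneg hγ hx.1
  · exact (convexOn_bregmanRpow hγ).le_left_of_right_le'' hx.1 (mem_Ici.2 zero_le_one) hxy hy1
      (by simpa using bregmanRpow_nonneg hγ hy.1)

theorem bregmanRpow_isTheta_one (hγ : 1 < γ) {l : ℝ} (hl : l < 1) :
    bregmanRpow γ =Θ[𝓟 (Icc 0 l)] fun _ ↦ (1 : ℝ) := by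
  set l₀ := max l 0
  have hl₀ : l₀ ∈ Icc 0 1 := ⟨le_max_right _ _, (max_lt hl one_pos).le⟩
  have hpos : 0 < bregmanRpow γ l₀ := bregmanRpow_pos hγ hl₀.1 (max_lt hl one_pos).ne
  refine isTheta_principal_of_le (C := γ) (C' := (bregmanRpow γ l₀)⁻¹)
    (fun s hs ↦ bregmanRpow_nonneg hγ.le hs.1) (fun _ _ ↦ zero_le_one)
    (fun s hs ↦ by simpa using bregmanRpow_le (by linarith) hs.1 (hs.2.trans hl.le))
    (fun s hs ↦ ?_)
  rw [inv_mul_eq_div, one_le_div hpos]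
  exact antitoneOn_bregmanRpow hγ.le ⟨hs.1, hs.2.trans hl.le⟩ hl₀ (hs.2.trans (le_max_left _ _))

theorem bregmanRpow_isTheta_sq (hγ : 1 < γ) {l r : ℝ} (hl : 0 < l) (hl1 : l < 1) (hr : 1 < r) :
    bregmanRpow γ =Θ[𝓟 (Icc l r)] fun s ↦ (s - 1) ^ 2 := by
  have hF : ∀ y ∈ Icc l r, HasDerivAt (bregmanRpow γ) (γ * y ^ (γ - 1) - γ) y := fun y hy ↦
    ((((Real.hasDerivAt_rpow_const (Or.inl (hl.trans_le hy.1).ne')).sub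
      ((hasDerivAt_id' y).const_mul γ)).add_const γ).sub_const 1).congr_deriv (by ring)
  have hF' : ∀ y ∈ Icc l r,
      HasDerivAt (fun y ↦ γ * y ^ (γ - 1) - γ) (γ * (γ - 1) * (y ^ γ / y ^ 2)) y := fun y hy ↦ by
    have hy0 := hl.trans_le hy.1
    refine (((Real.hasDerivAt_rpow_const (Or.inl hy0.ne')).const_mul γ).sub_const γ).congr_deriv ?_
    rw [sub_sub, one_add_one_eq_two, Real.rpow_sub hy0, Real.rpow_two]
    ring
  have hm : ∀ y ∈ Icc l r, γ * (γ - 1) * (l ^ γ / r ^ 2) ≤ γ * (γ - 1) * (y ^ γ / y ^ 2) :=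
    fun y hy ↦ by
      have hy0 := hl.trans_le hy.1
      gcongr
      exacts [hy.1, hy.2]
  have hM : ∀ y ∈ Icc l r, γ * (γ - 1) * (y ^ γ / y ^ 2) ≤ γ * (γ - 1) * (r ^ γ / l ^ 2) :=
    fun y hy ↦ by
      have hy0 := hl.trans_le hy.1
      gcongr
      exacts [hy.2, hy.1]
  have h1 : (1 : ℝ) ∈ interior (Icc l r) := by rw [interior_Icc]; exact ⟨hl1, hr⟩
  have hγ0 : 0 < γ * (γ - 1) * (l ^ γ / r ^ 2) := by
    have hγ1 := sub_pos.2 hγ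
    positivity
  refine isTheta_principal_of_le (C := γ * (γ - 1) * (r ^ γ / l ^ 2) / 2)
    (C' := (γ * (γ - 1) * (l ^ γ / r ^ 2) / 2)⁻¹)
    (fun s hs ↦ bregmanRpow_nonneg hγ.le (hl.le.trans hs.1)) (fun _ _ ↦ sq_nonneg _)
    (fun s hs ↦ ?_) (fun s hs ↦ ?_)
  · simpa using le_add_deriv_mul_add_sq_of_deriv2_le (convex_Icc l r) h1 hs hF hF' hM
  · have hlow := add_deriv_mul_add_sq_le_of_le_deriv2 (convex_Icc l r) h1 hs hF hF' hm
    simp only [bregmanRpow_one, Real.one_rpow, mul_one, sub_self, zero_mul, zero_add] at hlow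
    rw [inv_mul_eq_div, le_div_iff₀ (by positivity)]
    linarith

theorem bregmanRpow_isTheta_rpow (hγ : 1 < γ) {δ : ℝ} (hδ : 0 < δ) :
    bregmanRpow γ =Θ[𝓟 (Ici (1 + δ))] fun s ↦ |s - 1| ^ γ := by
  have hpos : 0 < bregmanRpow γ (1 + δ) := bregmanRpow_pos hγ (by linarith) (by linarith)
  refine isTheta_principal_of_le (C := ((1 + δ) / δ) ^ γ)
    (C' := 1 + γ * δ / bregmanRpow γ (1 + δ))
    (fun s hs ↦ bregmanRpow_nonneg hγ.le (by linarith [mem_Ici.1 hs]))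
    (fun s _ ↦ by positivity) (fun s hs ↦ ?_) (fun s hs ↦ ?_)
  all_goals have hs1 : 0 ≤ s - 1 := by linarith [mem_Ici.1 hs]
  · have hle : s ≤ (1 + δ) / δ * (s - 1) := by
      rw [div_mul_eq_mul_div, le_div_iff₀ hδ]
      nlinarith [mem_Ici.1 hs]
    calc bregmanRpow γ s ≤ s ^ γ := by
          unfold bregmanRpow
          nlinarith
      _ ≤ ((1 + δ) / δ * |s - 1|) ^ γ := by
          rw [abs_of_nonneg hs1]
          gcongr
          linarith
      _ = ((1 + δ) / δ) ^ γ * |s - 1| ^ γ := Real.mul_rpow (by positivity) (abs_nonneg _)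
  · -- Superadditivity of `x ↦ x ^ γ` gives `(s - 1) ^ γ ≤ F s + γ (s - 1)`, and the slope of
    -- the convex `F` from `1` bounds `s - 1` by a multiple of `F s`.
    have hsup := Real.add_rpow_le_rpow_add hs1 zero_le_one hγ.le
    rw [Real.one_rpow, sub_add_cancel] at hsup
    have hslope := (convexOn_bregmanRpow hγ.le).secant_mono (mem_Ici.2 zero_le_one)
      (mem_Ici.2 (by linarith : (0 : ℝ) ≤ 1 + δ)) (mem_Ici.2 (by linarith [mem_Ici.1 hs]))
      (by linarith) (by linarith [mem_Ici.1 hs]) (mem_Ici.1 hs)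
    rw [bregmanRpow_one, sub_zero, sub_zero, add_sub_cancel_left,
      div_le_div_iff₀ hδ (by linarith [mem_Ici.1 hs])] at hslope
    have hlin : γ * (s - 1) ≤ γ * δ / bregmanRpow γ (1 + δ) * bregmanRpow γ s := by
      rw [div_mul_eq_mul_div, le_div_iff₀ hpos]
      nlinarith
    rw [abs_of_nonneg hs1]
    unfold bregmanRpow at hlin ⊢
    nlinarith

theorem bregmanRpow_isTheta_sq_near_one (hγ : 1 < γ) {δ : ℝ} (hδ : 0 < δ) :
    bregmanRpow γ =Θ[𝓟 {s | 0 ≤ s ∧ |s - 1| ≤ δ}] fun s ↦ (s - 1) ^ 2 := by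
  have hsq : (fun s : ℝ ↦ (s - 1) ^ 2) =Θ[𝓟 (Icc 0 (1 / 2))] fun _ ↦ (1 : ℝ) :=
    isTheta_principal_of_le (C := 1) (C' := 4) (fun _ _ ↦ sq_nonneg _) (fun _ _ ↦ zero_le_one)
      (fun s hs ↦ by nlinarith [hs.1, hs.2]) (fun s hs ↦ by nlinarith [hs.1, hs.2])
  refine (((bregmanRpow_isTheta_one hγ (by norm_num)).trans hsq.symm).sup
    (bregmanRpow_isTheta_sq (l := 1 / 2) (r := 1 + δ) hγ (by norm_num) (by norm_num)
      (by linarith))).mono ?_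
  rw [sup_principal, principal_mono]
  rintro s ⟨hs0, hs⟩
  rcases le_total s (1 / 2) with h | h
  · exact Or.inl ⟨hs0, h⟩
  · exact Or.inr ⟨h, by linarith [(abs_le.1 hs).2]⟩

theorem bregmanRpow_isTheta_rpow_away_from_one (hγ : 1 < γ) {δ : ℝ} (hδ : 0 < δ) :
    bregmanRpow γ =Θ[𝓟 {s | 0 ≤ s ∧ δ ≤ |s - 1|}] fun s ↦ |s - 1| ^ γ := by
  have hweight : (fun s : ℝ ↦ |s - 1| ^ γ) =Θ[𝓟 (Icc 0 (1 - δ))] fun _ ↦ (1 : ℝ) := by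
    refine isTheta_principal_of_le (C := 1) (C' := (δ ^ γ)⁻¹) (fun _ _ ↦ by positivity)
      (fun _ _ ↦ zero_le_one) (fun s hs ↦ ?_) (fun s hs ↦ ?_)
    all_goals rw [abs_of_nonpos (by linarith [hs.2]), neg_sub]
    · simpa using Real.rpow_le_one (by linarith [hs.2]) (by linarith [hs.1]) (by linarith)
    · rw [inv_mul_eq_div, one_le_div (by positivity)]
      exact Real.rpow_le_rpow hδ.le (by linarith [hs.2]) (by linarith)
  refine (((bregmanRpow_isTheta_one hγ (by linarith)).trans hweight.symm).sup
    (bregmanRpow_isTheta_rpow hγ hδ)).mono ?_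
  rw [sup_principal, principal_mono]
  rintro s ⟨hs0, hs⟩
  rcases le_total s 1 with h | h
  · rw [abs_of_nonpos (by linarith)] at hs
    exact Or.inl ⟨hs0, by linarith⟩
  · rw [abs_of_nonneg (by linarith)] at hs
    exact Or.inr (mem_Ici.2 (by linarith))

end bregmanRpow

theorem potentialEnergy_integrable_iff_orlicz_general (N : ℕ) (a γ : ℝ)
    (ha : 0 < a) (hγ : 1 < γ) (δ : ℝ) (hδ : 0 < δ)
    (ρ : (Fin N → ℝ) → ℝ) (hρm : Measurable ρ) (hρ0 : ∀ x, 0 ≤ ρ x) :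
    Integrable (fun x => (a / (γ - 1)) * ((ρ x) ^ γ - γ * ρ x + γ - 1)) volume ↔
    (MemLp ({x | |ρ x - 1| ≤ δ}.indicator (fun x => ρ x - 1)) (ENNReal.ofReal 2) volume ∧
      MemLp ({x | δ ≤ |ρ x - 1|}.indicator (fun x => ρ x - 1)) (ENNReal.ofReal γ) volume) := by
  set A := {x | |ρ x - 1| ≤ δ}
  set B := {x | δ ≤ |ρ x - 1|}
  have hρ1 : Measurable fun x ↦ ρ x - 1 := hρm.sub_const 1
  have hA : MeasurableSet A := measurableSet_le hρ1.abs measurable_const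
  have hB : MeasurableSet B := measurableSet_le measurable_const hρ1.abs
  have hAB : A ∪ B = univ := eq_univ_of_forall fun x ↦ le_total |ρ x - 1| δ
  have hF : Measurable fun x ↦ bregmanRpow γ (ρ x) := measurable_bregmanRpow.comp hρm
  rw [integrable_const_mul_iff (isUnit_iff_ne_zero.2 (div_pos ha (sub_pos.2 hγ)).ne'),
    ← integrableOn_univ, ← hAB, integrableOn_union, memLp_indicator_iff_restrict hA,
    memLp_indicator_iff_restrict hB,
    ← integrable_norm_rpow_iff hρ1.aestronglyMeasurable (by simp) ENNReal.ofReal_ne_top,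
    ← integrable_norm_rpow_iff hρ1.aestronglyMeasurable (by simpa using hγ.trans' one_pos)
      ENNReal.ofReal_ne_top, ENNReal.toReal_ofReal zero_le_two,
    ENNReal.toReal_ofReal (by linarith)]
  simp only [Real.norm_eq_abs, Real.rpow_two, sq_abs]
  exact and_congr
    (((bregmanRpow_isTheta_sq_near_one hγ hδ).comp_tendsto
      (tendsto_principal_principal.2 fun x hx ↦ ⟨hρ0 x, hx⟩)).integrableOn_iff hA
      hF.aestronglyMeasurable (hρ1.pow_const 2).aestronglyMeasurable)
    (((bregmanRpow_isTheta_rpow_away_from_one hγ hδ).comp_tendsto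
      (tendsto_principal_principal.2 fun x hx ↦ ⟨hρ0 x, hx⟩)).integrableOn_iff hB
      hF.aestronglyMeasurable (hρ1.abs.pow_const γ).aestronglyMeasurable)

/-- For the pressure law `P(z) = a z^γ` with `a > 0`, `γ > 1`, the relative potential
energy `Π(ρ) - Π(1) = (a/(γ-1))(ρ^γ - γρ + γ - 1)` is integrable if and only if
`ρ - 1` belongs to the Orlicz space `L^γ_2(ℝ^N)`. -/
theorem potentialEnergy_integrable_iff_orlicz (N : ℕ) (hN : 1 ≤ N) (a γ : ℝ)
    (ha : 0 < a) (hγ : 1 < γ) (δ : ℝ) (hδ : 0 < δ)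
    (ρ : (Fin N → ℝ) → ℝ) (hρm : Measurable ρ) (hρ0 : ∀ x, 0 ≤ ρ x) :
    Integrable (fun x => (a / (γ - 1)) * ((ρ x) ^ γ - γ * ρ x + γ - 1)) volume ↔
    (MemLp ({x | |ρ x - 1| ≤ δ}.indicator (fun x => ρ x - 1)) (ENNReal.ofReal 2) volume ∧
      MemLp ({x | δ ≤ |ρ x - 1|}.indicator (fun x => ρ x - 1)) (ENNReal.ofReal γ) volume) :=
  potentialEnergy_integrable_iff_orlicz_general N a γ ha hγ δ hδ ρ hρm hρ0
end

section
/- Let N ≥ 1, κ̄ > 0, and let ρ : ℝ^N → ℝ be a C³ function with ρ(x) > 0 for all x. For the capillarity coefficient κ(ρ) = κ̄/ρ, one has for every x ∈ ℝ^N and every j ∈ {1, …, N}: (div K)_j(x) = κ̄ ρ(x) ( ∂_j(Δ(ln ρ))(x) + ½ ∂_j(|∇(ln ρ)|²)(x) ), where (div K)_j = ∂_j( ρκ(ρ)Δρ + ½(κ(ρ) + ρκ'(ρ))|∇ρ|² ) − Σ_{i=1}^N ∂_i( κ(ρ) ∂_iρ ∂_jρ ). -/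
/-!
With `L = ln ρ` one has `∂ᵢρ = ρ ∂ᵢL`. For `κ = κ̄/ρ` the first term of `div K` is `κ̄ ∂ⱼΔρ`
and the second is `κ̄ Σᵢ ∂ᵢ(ρ ∂ᵢL ∂ⱼL)`. Since `Δρ = ρ (ΔL + |∇L|²)`, expanding both by the
product rule, the terms carrying `∂ⱼL` cancel and what survives is
`ρ ∂ⱼ(ΔL + |∇L|²) - ρ Σᵢ ∂ᵢL ∂ⱼ∂ᵢL = ρ (∂ⱼΔL + ½ ∂ⱼ|∇L|²)`.
-/

open Real

/-- The `i`-th partial derivative of a function on `ℝ^N`. -/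
noncomputable def pd {N : ℕ} (i : Fin N) (f : (Fin N → ℝ) → ℝ) : (Fin N → ℝ) → ℝ :=
  fun x => fderiv ℝ f x (Pi.single i 1)

/-- The Laplacian on `ℝ^N`. -/
noncomputable def lap {N : ℕ} (f : (Fin N → ℝ) → ℝ) : (Fin N → ℝ) → ℝ :=
  fun x => ∑ i, pd i (pd i f) x

/-- The squared norm of the gradient, `|∇f|²`. -/
noncomputable def gradsq {N : ℕ} (f : (Fin N → ℝ) → ℝ) : (Fin N → ℝ) → ℝ :=
  fun x => ∑ i, (pd i f x) ^ 2

section PartialDerivatives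

variable {N : ℕ} {f g : (Fin N → ℝ) → ℝ} {x : Fin N → ℝ} {i : Fin N}

lemma contDiff_pd {n : WithTop ℕ∞} (i : Fin N) (h : ContDiff ℝ (n + 1) f) :
    ContDiff ℝ n (pd i f) :=
  (h.fderiv_right le_rfl).clm_apply contDiff_const

lemma differentiableAt_pd (h : ContDiff ℝ 2 f) (i : Fin N) (x : Fin N → ℝ) :
    DifferentiableAt ℝ (pd i f) x :=
  ((contDiff_pd (n := 1) i h).differentiable one_ne_zero).differentiableAt

lemma contDiff_lap {n : WithTop ℕ∞} (h : ContDiff ℝ (n + 1 + 1) f) : ContDiff ℝ n (lap f) :=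
  ContDiff.sum fun i _ => contDiff_pd i (contDiff_pd i h)

lemma contDiff_gradsq {n : WithTop ℕ∞} (h : ContDiff ℝ (n + 1) f) :
    ContDiff ℝ n (gradsq f) :=
  ContDiff.sum fun i _ => (contDiff_pd i h).pow 2

lemma pd_add (hf : DifferentiableAt ℝ f x) (hg : DifferentiableAt ℝ g x) :
    pd i (fun y => f y + g y) x = pd i f x + pd i g x := by
  simp [pd, fderiv_fun_add hf hg]

lemma pd_mul (hf : DifferentiableAt ℝ f x) (hg : DifferentiableAt ℝ g x) :
    pd i (fun y => f y * g y) x = pd i f x * g x + f x * pd i g x := by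
  simp [pd, fderiv_fun_mul hf hg]
  ring

lemma pd_const_mul (c : ℝ) (f : (Fin N → ℝ) → ℝ) (x : Fin N → ℝ) :
    pd i (fun y => c * f y) x = c * pd i f x := by
  have hsmul : (fun y => c * f y) = c • f := rfl
  rw [pd, hsmul, fderiv_const_smul_field]
  rfl

lemma pd_sum {ι : Type*} (s : Finset ι) {F : ι → (Fin N → ℝ) → ℝ}
    (h : ∀ k ∈ s, DifferentiableAt ℝ (F k) x) :
    pd i (fun y => ∑ k ∈ s, F k y) x = ∑ k ∈ s, pd i (F k) x := by
  simp [pd, fderiv_fun_sum h]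

lemma pd_log (hf : DifferentiableAt ℝ f x) (h0 : f x ≠ 0) :
    pd i (fun y => log (f y)) x = pd i f x / f x := by
  simp [pd, (hf.hasFDerivAt.log h0).fderiv]
  ring

lemma pd_comm (h : ContDiff ℝ 2 f) (k i : Fin N) (x : Fin N → ℝ) :
    pd k (pd i f) x = pd i (pd k f) x := by
  have hd : DifferentiableAt ℝ (fderiv ℝ f) x :=
    ((h.fderiv_right (by norm_num : (1 : WithTop ℕ∞) + 1 ≤ 2)).differentiable
      one_ne_zero).differentiableAt
  have hpd : ∀ v w, fderiv ℝ (fun y => fderiv ℝ f y v) x w = fderiv ℝ (fderiv ℝ f) x w v := by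
    intro v w
    simp [fderiv_clm_apply hd (differentiableAt_const v)]
  show fderiv ℝ (fun y => fderiv ℝ f y (Pi.single i 1)) x (Pi.single k 1)
      = fderiv ℝ (fun y => fderiv ℝ f y (Pi.single k 1)) x (Pi.single i 1)
  rw [hpd, hpd]
  exact h.contDiffAt.isSymmSndFDerivAt (by norm_num) _ _

lemma pd_gradsq (h : ContDiff ℝ 2 f) (j : Fin N) (x : Fin N → ℝ) :
    pd j (gradsq f) x = 2 * ∑ i, pd i f x * pd i (pd j f) x := by
  have hd := fun i => differentiableAt_pd h i x
  have hsq : gradsq f = fun y => ∑ i, pd i f y * pd i f y := by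
    funext y
    simp only [gradsq, sq]
  rw [hsq, pd_sum _ fun i _ => (hd i).fun_mul (hd i), Finset.mul_sum]
  exact Finset.sum_congr rfl fun i _ => by rw [pd_mul (hd i) (hd i), pd_comm h j i]; ring

end PartialDerivatives

section LogarithmicForm

variable {N : ℕ} {ρ L : (Fin N → ℝ) → ℝ} {x : Fin N → ℝ}

lemma pd_eq_mul_pd_log (hρ : DifferentiableAt ℝ ρ x) (h0 : ρ x ≠ 0) (i : Fin N) :
    pd i ρ x = ρ x * pd i (fun y => log (ρ y)) x := by
  rw [pd_log hρ h0]
  field_simp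

lemma lap_eq_mul_lap_add_gradsq (hρ : DifferentiableAt ℝ ρ x) (hL : ContDiff ℝ 2 L)
    (hρL : ∀ i, pd i ρ = fun y => ρ y * pd i L y) :
    lap ρ x = ρ x * (lap L x + gradsq L x) := by
  have hd := fun i => differentiableAt_pd hL i x
  simp only [lap, gradsq, hρL, pd_mul hρ (hd _), mul_add, Finset.mul_sum,
    ← Finset.sum_add_distrib]
  exact Finset.sum_congr rfl fun i _ => by ring

/-- The Korteweg divergence for `κ = κ̄/ρ`, divided by `κ̄` and written through `L = ln ρ`. -/
lemma pd_mul_lap_add_gradsq_sub_sum (hρ : DifferentiableAt ℝ ρ x) (hL : ContDiff ℝ 3 L)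
    (hρL : ∀ i, pd i ρ x = ρ x * pd i L x) (j : Fin N) :
    pd j (fun y => ρ y * (lap L y + gradsq L y)) x
        - ∑ i, pd i (fun y => ρ y * pd i L y * pd j L y) x
      = ρ x * (pd j (lap L) x + (1 / 2) * pd j (gradsq L) x) := by
  have hL2 : ContDiff ℝ 2 L := hL.of_le (by norm_num)
  have hd := fun i => differentiableAt_pd hL2 i x
  have hlap : DifferentiableAt ℝ (lap L) x :=
    ((contDiff_lap (n := 1) hL).differentiable (by norm_num)).differentiableAt
  have hgrad : DifferentiableAt ℝ (gradsq L) x :=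
    ((contDiff_gradsq (n := 1) hL2).differentiable (by norm_num)).differentiableAt
  have hterm : ∀ i, pd i (fun y => ρ y * pd i L y * pd j L y) x
      = ρ x * pd j L x * (pd i (pd i L) x + pd i L x ^ 2) + ρ x * (pd i L x * pd i (pd j L) x) := by
    intro i
    rw [pd_mul (hρ.fun_mul (hd i)) (hd j), pd_mul hρ (hd i), hρL, pd_comm hL2 i j]
    ring
  rw [pd_mul (g := fun y => lap L y + gradsq L y) hρ (hlap.fun_add hgrad), pd_add hlap hgrad,
    Finset.sum_congr rfl fun i _ => hterm i, Finset.sum_add_distrib, ← Finset.mul_sum,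
    ← Finset.mul_sum, Finset.sum_add_distrib, hρL, pd_gradsq hL2]
  simp only [lap, gradsq]
  ring

end LogarithmicForm

theorem divK_eq_logForm_general (N : ℕ) (κb : ℝ)
    (ρ : (Fin N → ℝ) → ℝ) (hρ : ContDiff ℝ 3 ρ) (hpos : ∀ x, 0 < ρ x)
    (x : Fin N → ℝ) (j : Fin N) :
    pd j (fun y => ρ y * (κb / ρ y) * lap ρ y
        + (1 / 2) * ((κb / ρ y) + ρ y * (-κb / (ρ y) ^ 2)) * gradsq ρ y) x
      - ∑ i, pd i (fun y => (κb / ρ y) * pd i ρ y * pd j ρ y) x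
    = κb * ρ x * (pd j (lap (fun y => Real.log (ρ y))) x
        + (1 / 2) * pd j (gradsq (fun y => Real.log (ρ y))) x) := by
  set L : (Fin N → ℝ) → ℝ := fun y => log (ρ y)
  have hd : Differentiable ℝ ρ := hρ.differentiable (by norm_num)
  have hL : ContDiff ℝ 3 L := hρ.log fun y => (hpos y).ne'
  have hρL : ∀ i, pd i ρ = fun y => ρ y * pd i L y := fun i =>
    funext fun y => pd_eq_mul_pd_log (hd y) (hpos y).ne' i
  have hfirst : (fun y => ρ y * (κb / ρ y) * lap ρ y
      + (1 / 2) * ((κb / ρ y) + ρ y * (-κb / (ρ y) ^ 2)) * gradsq ρ y)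
      = fun y => κb * (ρ y * (lap L y + gradsq L y)) := by
    funext y
    rw [lap_eq_mul_lap_add_gradsq (hd y) (hL.of_le (by norm_num)) hρL]
    field_simp [(hpos y).ne']
    ring
  have hterm : ∀ i, (fun y => (κb / ρ y) * pd i ρ y * pd j ρ y)
      = fun y => κb * (ρ y * pd i L y * pd j L y) := fun i => by
    funext y
    simp only [hρL]
    field_simp [(hpos y).ne']
  rw [hfirst, pd_const_mul, Finset.sum_congr rfl fun i _ => by rw [hterm i, pd_const_mul],
    ← Finset.mul_sum, ← mul_sub,
    pd_mul_lap_add_gradsq_sub_sum (hd x) hL (fun i => congrFun (hρL i) x)]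
  ring

/-- For the capillarity coefficient `κ(ρ) = κ̄/ρ` (so `κ'(ρ) = -κ̄/ρ²`), the divergence
of the Korteweg tensor satisfies
`(div K)_j = κ̄ ρ ( ∂_j Δ(ln ρ) + ½ ∂_j |∇(ln ρ)|² )`. -/
theorem divK_eq_logForm (N : ℕ) (hN : 1 ≤ N) (κb : ℝ) (hκb : 0 < κb)
    (ρ : (Fin N → ℝ) → ℝ) (hρ : ContDiff ℝ 3 ρ) (hpos : ∀ x, 0 < ρ x)
    (x : Fin N → ℝ) (j : Fin N) :
    pd j (fun y => ρ y * (κb / ρ y) * lap ρ y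
        + (1 / 2) * ((κb / ρ y) + ρ y * (-κb / (ρ y) ^ 2)) * gradsq ρ y) x
      - ∑ i, pd i (fun y => (κb / ρ y) * pd i ρ y * pd j ρ y) x
    = κb * ρ x * (pd j (lap (fun y => Real.log (ρ y))) x
        + (1 / 2) * pd j (gradsq (fun y => Real.log (ρ y))) x) :=
  divK_eq_logForm_general N κb ρ hρ hpos x j
end

section
/- Let N ≥ 1, a ≥ 0, b ≥ 0, c > 0. Let q, F : ℝ × ℝ^N → ℝ and u, G : ℝ × ℝ^N → ℝ^N be C^∞ functions, all supported, for every time t, in a fixed compact subset K ⊂ ℝ^N, and satisfying on ℝ × ℝ^N the linear system ∂_t q + div u = F and ∂_t u − aΔu − b∇(div u) − c∇(Δq) = G (spatial derivatives in x). Then for every t ∈ ℝ: (d/dt)[ ∫_{ℝ^N} ∇q(t,x)·u(t,x) dx ] + c ∫_{ℝ^N} (Δq(t,x))² dx = ∫_{ℝ^N} ( G·∇q + (div u)² + u·∇F − a Σ_{i,j} ∂_iu_j ∂_i∂_jq − b (Δq)(div u) )(t,x) dx. -/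
open Real Set MeasureTheory

/-- Time partial derivative of a function of `(t, x) ∈ ℝ × ℝ^N`. -/
noncomputable def pt {N : ℕ} (f : ℝ × (Fin N → ℝ) → ℝ) : ℝ × (Fin N → ℝ) → ℝ :=
  fun p => deriv (fun s => f (s, p.2)) p.1

/-- Spatial partial derivative in the `i`-th direction of a function of `(t, x)`. -/
noncomputable def px {N : ℕ} (i : Fin N) (f : ℝ × (Fin N → ℝ) → ℝ) : ℝ × (Fin N → ℝ) → ℝ :=
  fun p => deriv (fun y => f (p.1, Function.update p.2 i y)) (p.2 i)

/-- Spatial Laplacian. -/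
noncomputable def lapx {N : ℕ} (f : ℝ × (Fin N → ℝ) → ℝ) : ℝ × (Fin N → ℝ) → ℝ :=
  fun p => ∑ i, px i (px i f) p

variable {N : ℕ}

lemma hasDerivAt_px {f : ℝ × (Fin N → ℝ) → ℝ} {p : ℝ × (Fin N → ℝ)}
    (hf : DifferentiableAt ℝ f p) (i : Fin N) :
    HasDerivAt (fun y => f (p.1, Function.update p.2 i y))
      (fderiv ℝ f p ((0 : ℝ), Pi.single i (1:ℝ))) (p.2 i) := by
  have hm : HasDerivAt (fun y => ((p.1, Function.update p.2 i y) : ℝ × (Fin N → ℝ)))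
      ((0 : ℝ), Pi.single i (1:ℝ)) (p.2 i) :=
    (hasDerivAt_const _ p.1).prodMk (hasDerivAt_update p.2 i (p.2 i))
  have hf' : HasFDerivAt f (fderiv ℝ f p) (p.1, Function.update p.2 i (p.2 i)) := by
    rw [Function.update_eq_self]; exact hf.hasFDerivAt
  exact hf'.comp_hasDerivAt (p.2 i) hm

lemma px_eq {f : ℝ × (Fin N → ℝ) → ℝ} {p : ℝ × (Fin N → ℝ)}
    (hf : DifferentiableAt ℝ f p) (i : Fin N) :
    px i f p = fderiv ℝ f p ((0 : ℝ), Pi.single i (1:ℝ)) := (hasDerivAt_px hf i).deriv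

lemma hasDerivAt_pt {f : ℝ × (Fin N → ℝ) → ℝ} {p : ℝ × (Fin N → ℝ)}
    (hf : DifferentiableAt ℝ f p) :
    HasDerivAt (fun s => f (s, p.2)) (fderiv ℝ f p ((1 : ℝ), (0 : Fin N → ℝ))) p.1 := by
  have hm : HasDerivAt (fun s => ((s, p.2) : ℝ × (Fin N → ℝ)))
      ((1 : ℝ), (0 : Fin N → ℝ)) p.1 := (hasDerivAt_id p.1).prodMk (hasDerivAt_const _ _)
  have := hf.hasFDerivAt.comp_hasDerivAt p.1 (by simpa using hm)
  exact this

lemma pt_eq {f : ℝ × (Fin N → ℝ) → ℝ} {p : ℝ × (Fin N → ℝ)}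
    (hf : DifferentiableAt ℝ f p) :
    pt f p = fderiv ℝ f p ((1 : ℝ), (0 : Fin N → ℝ)) := (hasDerivAt_pt hf).deriv

lemma px_smooth {f : ℝ × (Fin N → ℝ) → ℝ} (hf : ContDiff ℝ (⊤ : ℕ∞) f) (i : Fin N) :
    ContDiff ℝ (⊤ : ℕ∞) (px i f) := by
  have : px i f = fun p => fderiv ℝ f p ((0 : ℝ), Pi.single i (1:ℝ)) := by
    ext p; exact px_eq (hf.differentiable (by simp) p) i
  rw [this]
  exact (hf.fderiv_right (by simp)).clm_apply contDiff_const

lemma pt_smooth {f : ℝ × (Fin N → ℝ) → ℝ} (hf : ContDiff ℝ (⊤ : ℕ∞) f) :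
    ContDiff ℝ (⊤ : ℕ∞) (pt f) := by
  have : pt f = fun p => fderiv ℝ f p ((1 : ℝ), (0 : Fin N → ℝ)) := by
    ext p; exact pt_eq (hf.differentiable (by simp) p)
  rw [this]
  exact (hf.fderiv_right (by simp)).clm_apply contDiff_const

lemma fderiv_apply_const {f : ℝ × (Fin N → ℝ) → ℝ} (hf : ContDiff ℝ (⊤ : ℕ∞) f)
    (p : ℝ × (Fin N → ℝ)) (v w : ℝ × (Fin N → ℝ)) :
    fderiv ℝ (fun r => fderiv ℝ f r v) p w = fderiv ℝ (fderiv ℝ f) p w v := by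
  have hd' : DifferentiableAt ℝ (fderiv ℝ f) p :=
    (hf.fderiv_right (m := (⊤ : ℕ∞)) (by simp)).differentiable (by simp) p
  have h := (hd'.hasFDerivAt.clm_apply (hasFDerivAt_const v p)).fderiv
  rw [h]
  simp

lemma snd_symm {f : ℝ × (Fin N → ℝ) → ℝ} (hf : ContDiff ℝ (⊤ : ℕ∞) f)
    (p : ℝ × (Fin N → ℝ)) (v w : ℝ × (Fin N → ℝ)) :
    fderiv ℝ (fderiv ℝ f) p v w = fderiv ℝ (fderiv ℝ f) p w v :=
  second_derivative_symmetric
    (fun y => ((hf.differentiable (by simp)) y).hasFDerivAt)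
    (((hf.fderiv_right (m := (⊤ : ℕ∞)) (by simp)).differentiable (by simp) p).hasFDerivAt) v w

lemma pt_px_comm {f : ℝ × (Fin N → ℝ) → ℝ} (hf : ContDiff ℝ (⊤ : ℕ∞) f) (i : Fin N)
    (p : ℝ × (Fin N → ℝ)) : pt (px i f) p = px i (pt f) p := by
  have hpx : px i f = fun r => fderiv ℝ f r ((0:ℝ), Pi.single i (1:ℝ)) := by
    ext r; exact px_eq (hf.differentiable (by simp) r) i
  have hpt : pt f = fun r => fderiv ℝ f r ((1:ℝ), (0 : Fin N → ℝ)) := by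
    ext r; exact pt_eq (hf.differentiable (by simp) r)
  rw [pt_eq ((px_smooth hf i).differentiable (by simp) p),
    px_eq ((pt_smooth hf).differentiable (by simp) p) i, hpx, hpt,
    fderiv_apply_const hf, fderiv_apply_const hf, snd_symm hf]

lemma px_px_comm {f : ℝ × (Fin N → ℝ) → ℝ} (hf : ContDiff ℝ (⊤ : ℕ∞) f) (i j : Fin N)
    (p : ℝ × (Fin N → ℝ)) : px i (px j f) p = px j (px i f) p := by
  have hi : px i f = fun r => fderiv ℝ f r ((0:ℝ), Pi.single i (1:ℝ)) := by
    ext r; exact px_eq (hf.differentiable (by simp) r) i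
  have hj : px j f = fun r => fderiv ℝ f r ((0:ℝ), Pi.single j (1:ℝ)) := by
    ext r; exact px_eq (hf.differentiable (by simp) r) j
  rw [px_eq ((px_smooth hf j).differentiable (by simp) p) i,
    px_eq ((px_smooth hf i).differentiable (by simp) p) j, hi, hj,
    fderiv_apply_const hf, fderiv_apply_const hf, snd_symm hf]

variable {K : Set (Fin N → ℝ)}

lemma px_support (hK : IsCompact K) {f : ℝ × (Fin N → ℝ) → ℝ} {t : ℝ}
    (h0 : ∀ x, x ∉ K → f (t, x) = 0) (i : Fin N) :
    ∀ x, x ∉ K → px i f (t, x) = 0 := by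
  intro x hx
  have hopen : IsOpen Kᶜ := hK.isClosed.isOpen_compl
  have hc : ContinuousAt (fun y => Function.update x i y) (x i) :=
    (hasDerivAt_update x i (x i)).continuousAt
  have hev : ∀ᶠ y in nhds (x i), Function.update x i y ∈ Kᶜ := by
    have : Kᶜ ∈ nhds (Function.update x i (x i)) := by
      rw [Function.update_eq_self]; exact hopen.mem_nhds hx
    exact hc.preimage_mem_nhds this
  have heq : (fun y => f (t, Function.update x i y)) =ᶠ[nhds (x i)] (fun _ => 0) := by
    filter_upwards [hev] with y hy; exact h0 _ hy
  show deriv (fun y => f (t, Function.update x i y)) (x i) = 0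
  rw [heq.deriv_eq, deriv_const]

lemma pt_support {f : ℝ × (Fin N → ℝ) → ℝ}
    (h0 : ∀ t x, x ∉ K → f (t, x) = 0) :
    ∀ t x, x ∉ K → pt f (t, x) = 0 := by
  intro t x hx
  have : (fun s => f (s, x)) = fun _ => 0 := by ext s; exact h0 s x hx
  show deriv (fun s => f (s, x)) t = 0
  rw [this, deriv_const]

lemma integrable_of_supp (hK : IsCompact K) {g : (Fin N → ℝ) → ℝ}
    (hg : Continuous g) (h0 : ∀ x, x ∉ K → g x = 0) : Integrable g := by
  exact hg.integrable_of_hasCompactSupport (HasCompactSupport.intro hK h0)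

lemma contDiff_slice {f : ℝ × (Fin N → ℝ) → ℝ} (hf : ContDiff ℝ (⊤ : ℕ∞) f) (t : ℝ) :
    ContDiff ℝ (⊤ : ℕ∞) (fun x : Fin N → ℝ => f (t, x)) :=
  hf.comp (contDiff_const.prodMk contDiff_id)

lemma px_eq_spatial {f : ℝ × (Fin N → ℝ) → ℝ} (hf : ContDiff ℝ (⊤ : ℕ∞) f) (t : ℝ)
    (x : Fin N → ℝ) (i : Fin N) :
    fderiv ℝ (fun x : Fin N → ℝ => f (t, x)) x (Pi.single i (1:ℝ)) = px i f (t, x) := by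
  have hd : DifferentiableAt ℝ (fun x : Fin N → ℝ => f (t, x)) x :=
    (contDiff_slice hf t).differentiable (by simp) x
  have h : HasDerivAt (fun y => f (t, Function.update x i y))
      (fderiv ℝ (fun x : Fin N → ℝ => f (t, x)) x (Pi.single i (1:ℝ))) (x i) := by
    have hu : HasDerivAt (fun y => Function.update x i y) (Pi.single i (1:ℝ)) (x i) :=
      hasDerivAt_update x i (x i)
    have hfd : HasFDerivAt (fun x : Fin N → ℝ => f (t, x))
        (fderiv ℝ (fun x : Fin N → ℝ => f (t, x)) x) (Function.update x i (x i)) := by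
      rw [Function.update_eq_self]; exact hd.hasFDerivAt
    exact hfd.comp_hasDerivAt (x i) hu
  exact h.deriv.symm

lemma ibp (hK : IsCompact K) {f g : ℝ × (Fin N → ℝ) → ℝ}
    (hf : ContDiff ℝ (⊤ : ℕ∞) f) (hg : ContDiff ℝ (⊤ : ℕ∞) g) (t : ℝ)
    (hfs : ∀ x, x ∉ K → f (t, x) = 0) (i : Fin N) :
    ∫ x : Fin N → ℝ, f (t, x) * px i g (t, x)
      = - ∫ x : Fin N → ℝ, px i f (t, x) * g (t, x) := by
  have e1 : (fun x : Fin N → ℝ =>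
      fderiv ℝ (fun x : Fin N → ℝ => f (t, x)) x (Pi.single i (1:ℝ)) * g (t, x))
      = fun x : Fin N → ℝ => px i f (t, x) * g (t, x) := by
    funext x; rw [px_eq_spatial hf t x i]
  have e2 : (fun x : Fin N → ℝ =>
      f (t, x) * fderiv ℝ (fun x : Fin N → ℝ => g (t, x)) x (Pi.single i (1:ℝ)))
      = fun x : Fin N → ℝ => f (t, x) * px i g (t, x) := by
    funext x; rw [px_eq_spatial hg t x i]
  have h1 : Integrable (fun x : Fin N → ℝ => px i f (t, x) * g (t, x)) :=
    integrable_of_supp hK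
      ((contDiff_slice (px_smooth hf i) t).continuous.mul (contDiff_slice hg t).continuous)
      (fun x hx => by rw [px_support hK hfs i x hx, zero_mul])
  have h2 : Integrable (fun x : Fin N → ℝ => f (t, x) * px i g (t, x)) :=
    integrable_of_supp hK
      ((contDiff_slice hf t).continuous.mul (contDiff_slice (px_smooth hg i) t).continuous)
      (fun x hx => by rw [hfs x hx, zero_mul])
  have h3 : Integrable (fun x : Fin N → ℝ => f (t, x) * g (t, x)) :=
    integrable_of_supp hK
      ((contDiff_slice hf t).continuous.mul (contDiff_slice hg t).continuous)
      (fun x hx => by rw [hfs x hx, zero_mul])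
  have key := integral_mul_fderiv_eq_neg_fderiv_mul_of_integrable (μ := volume)
    (f := fun x : Fin N → ℝ => f (t, x)) (g := fun x : Fin N → ℝ => g (t, x))
    (v := Pi.single i (1:ℝ))
    (by rw [e1]; exact h1) (by rw [e2]; exact h2) h3
    (fun x _ => (contDiff_slice hf t).differentiable (by simp) x)
    (fun x _ => (contDiff_slice hg t).differentiable (by simp) x)
  rw [e1, e2] at key
  exact key

lemma deriv_under_integral (hK : IsCompact K) {g : ℝ × (Fin N → ℝ) → ℝ}
    (hg : ContDiff ℝ (⊤ : ℕ∞) g) (h0 : ∀ t x, x ∉ K → g (t, x) = 0) (t : ℝ) :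
    HasDerivAt (fun s => ∫ x : Fin N → ℝ, g (s, x)) (∫ x : Fin N → ℝ, pt g (t, x)) t := by
  have hptc : Continuous (pt g) := (pt_smooth hg).continuous
  have hS : IsCompact ((Metric.closedBall t 1) ×ˢ K) := (isCompact_closedBall t 1).prod hK
  obtain ⟨C, hC⟩ := hS.exists_bound_of_continuousOn hptc.continuousOn
  set bound : (Fin N → ℝ) → ℝ := K.indicator (fun _ => C) with hbound
  have hb_int : Integrable bound := by
    rw [hbound, integrable_indicator_iff hK.isClosed.measurableSet]
    exact integrableOn_const hK.measure_lt_top.ne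
  have main := hasDerivAt_integral_of_dominated_loc_of_deriv_le
    (F := fun s (x : Fin N → ℝ) => g (s, x)) (F' := fun s (x : Fin N → ℝ) => pt g (s, x))
    (μ := volume) (x₀ := t) (bound := bound) (Metric.ball_mem_nhds t one_pos)
    (Filter.Eventually.of_forall fun s =>
      ((contDiff_slice hg s).continuous.aestronglyMeasurable))
    (integrable_of_supp hK (contDiff_slice hg t).continuous (h0 t))
    ((contDiff_slice (pt_smooth hg) t).continuous.aestronglyMeasurable)
    (Filter.Eventually.of_forall fun x => fun s hs => ?_)
    hb_int
    (Filter.Eventually.of_forall fun x => fun s _ => ?_)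
  · exact main.2
  · by_cases hx : x ∈ K
    · have hmem : ((s, x) : ℝ × (Fin N → ℝ)) ∈ (Metric.closedBall t 1) ×ˢ K :=
        ⟨Metric.ball_subset_closedBall hs, hx⟩
      have : bound x = C := by rw [hbound]; simp [hx]
      rw [this]
      exact hC _ hmem
    · have : bound x = 0 := by rw [hbound]; simp [hx]
      rw [this]
      have hz := pt_support h0 s x hx
      simp [hz]
  · have hd := hasDerivAt_pt (hg.differentiable (by simp) ((s, x) : ℝ × (Fin N → ℝ)))
    rwa [← pt_eq (hg.differentiable (by simp) ((s, x) : ℝ × (Fin N → ℝ)))] at hd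

lemma pt_slice {f : ℝ × (Fin N → ℝ) → ℝ} (hf : ContDiff ℝ (⊤ : ℕ∞) f) (t : ℝ) (x : Fin N → ℝ) :
    HasDerivAt (fun s => f (s, x)) (pt f (t, x)) t := by
  rw [pt_eq (hf.differentiable (by simp) ((t, x) : ℝ × (Fin N → ℝ)))]
  exact hasDerivAt_pt (hf.differentiable (by simp) ((t, x) : ℝ × (Fin N → ℝ)))

lemma px_sub {f g : ℝ × (Fin N → ℝ) → ℝ} (hf : ContDiff ℝ (⊤ : ℕ∞) f) (hg : ContDiff ℝ (⊤ : ℕ∞) g)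
    (i : Fin N) (p : ℝ × (Fin N → ℝ)) :
    px i (fun r => f r - g r) p = px i f p - px i g p := by
  have h := (hasDerivAt_px (hf.differentiable (by simp) p) i).sub
    (hasDerivAt_px (hg.differentiable (by simp) p) i)
  rw [px_eq (hf.differentiable (by simp) p) i, px_eq (hg.differentiable (by simp) p) i]
  exact h.deriv


/-- Cross energy identity for the linearized Korteweg system
`∂ₜq + div u = F`, `∂ₜu − aΔu − b∇div u − c∇Δq = G`:
`d/dt[∫∇q·u] + c∫(Δq)² = ∫( G·∇q + (div u)² + u·∇F − aΣ∂ᵢuⱼ∂ᵢ∂ⱼq − b(Δq)(div u) )`. -/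
theorem linearized_korteweg_cross_energy (N : ℕ) (hN : 1 ≤ N) (a b c : ℝ)
    (ha : 0 ≤ a) (hb : 0 ≤ b) (hc : 0 < c)
    (q F : ℝ × (Fin N → ℝ) → ℝ) (u G : ℝ × (Fin N → ℝ) → (Fin N → ℝ))
    (hq : ContDiff ℝ (⊤ : ℕ∞) q) (hF : ContDiff ℝ (⊤ : ℕ∞) F) (hu : ContDiff ℝ (⊤ : ℕ∞) u) (hG : ContDiff ℝ (⊤ : ℕ∞) G)
    (K : Set (Fin N → ℝ)) (hK : IsCompact K)
    (hsupp : ∀ t : ℝ, ∀ x : Fin N → ℝ, x ∉ K →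
      q (t, x) = 0 ∧ u (t, x) = 0 ∧ F (t, x) = 0 ∧ G (t, x) = 0)
    (hmass : ∀ p, pt q p + ∑ i, px i (fun r => u r i) p = F p)
    (hmom : ∀ p, ∀ j : Fin N,
      pt (fun r => u r j) p - a * lapx (fun r => u r j) p
        - b * px j (fun r => ∑ i, px i (fun s => u s i) r) p
        - c * px j (lapx q) p = G p j) :
    ∀ t : ℝ,
      HasDerivAt
        (fun s => ∫ x : Fin N → ℝ, ∑ i, px i q (s, x) * u (s, x) i)
        ((∫ x : Fin N → ℝ,
            ((∑ j, G (t, x) j * px j q (t, x))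
              + (∑ i, px i (fun r => u r i) (t, x)) ^ 2
              + ∑ i, u (t, x) i * px i F (t, x)
              - a * ∑ i, ∑ j, px i (fun r => u r j) (t, x) * px i (px j q) (t, x)
              - b * lapx q (t, x) * ∑ i, px i (fun r => u r i) (t, x)))
          - c * ∫ x : Fin N → ℝ, (lapx q (t, x)) ^ 2)
        t := by
  intro t
  -- abbreviations
  set uf : Fin N → (ℝ × (Fin N → ℝ) → ℝ) := fun j => fun p => u p j with huf
  set du : ℝ × (Fin N → ℝ) → ℝ := fun p => ∑ i, px i (uf i) p with hdu
  -- smoothness facts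
  have huj : ∀ j, ContDiff ℝ (⊤ : ℕ∞) (uf j) := fun j => contDiff_pi.1 hu j
  have hGj : ∀ j, ContDiff ℝ (⊤ : ℕ∞) (fun p => G p j) := fun j => contDiff_pi.1 hG j
  have hdus : ContDiff ℝ (⊤ : ℕ∞) du := ContDiff.sum fun i _ => px_smooth (huj i) i
  have hLqs : ContDiff ℝ (⊤ : ℕ∞) (lapx q) := by
    unfold lapx; exact ContDiff.sum fun i _ => px_smooth (px_smooth hq i) i
  have hlapu : ∀ j, ContDiff ℝ (⊤ : ℕ∞) (lapx (uf j)) := fun j => by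
    unfold lapx; exact ContDiff.sum fun i _ => px_smooth (px_smooth (huj j) i) i
  -- support facts
  have squ : ∀ s x, x ∉ K → q (s, x) = 0 := fun s x hx => (hsupp s x hx).1
  have suj : ∀ j, ∀ s x, x ∉ K → uf j (s, x) = 0 := fun j s x hx => by
    simpa using congrFun (hsupp s x hx).2.1 j
  have sF : ∀ s x, x ∉ K → F (s, x) = 0 := fun s x hx => (hsupp s x hx).2.2.1
  have sGj : ∀ j, ∀ s x, x ∉ K → G (s, x) j = 0 := fun j s x hx => by
    simpa using congrFun (hsupp s x hx).2.2.2 j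
  have sdu : ∀ x, x ∉ K → du (t, x) = 0 := fun x hx =>
    Finset.sum_eq_zero fun i _ => px_support hK (fun y hy => suj i t y hy) i x hx
  have sLq : ∀ x, x ∉ K → lapx q (t, x) = 0 := fun x hx =>
    Finset.sum_eq_zero fun i _ =>
      px_support hK (fun y hy => px_support hK (fun z hz => squ t z hz) i y hy) i x hx
  have spxq : ∀ i, ∀ x, x ∉ K → px i q (t, x) = 0 := fun i x hx =>
    px_support hK (fun y hy => squ t y hy) i x hx
  -- integrability helper
  have hmulint : ∀ (f g : ℝ × (Fin N → ℝ) → ℝ), ContDiff ℝ (⊤ : ℕ∞) f → ContDiff ℝ (⊤ : ℕ∞) g →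
      (∀ x, x ∉ K → f (t, x) = 0) →
      Integrable (fun x : Fin N → ℝ => f (t, x) * g (t, x)) := fun f g hf hg h0 =>
    integrable_of_supp hK
      ((contDiff_slice hf t).continuous.mul (contDiff_slice hg t).continuous)
      (fun x hx => by rw [h0 x hx, zero_mul])
  -- the time derivative via differentiation under the integral
  have hΦs : ContDiff ℝ (⊤ : ℕ∞) (fun p : ℝ × (Fin N → ℝ) => ∑ i, px i q p * u p i) :=
    ContDiff.sum fun i _ => (px_smooth hq i).mul (huj i)
  have hΦsupp : ∀ s x, x ∉ K → (∑ i, px i q (s, x) * u (s, x) i) = 0 := fun s x hx =>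
    Finset.sum_eq_zero fun i _ => by simp [congrFun (hsupp s x hx).2.1 i]
  have hder := deriv_under_integral hK hΦs hΦsupp t
  -- pointwise formula for the time derivative of the integrand
  have hptq : pt q = fun p => F p - du p := funext fun p => by
    have h := hmass p
    change pt q p = F p - ∑ i, px i (uf i) p
    linarith
  have hptu : ∀ (p : ℝ × (Fin N → ℝ)) (j : Fin N), pt (uf j) p
      = G p j + a * lapx (uf j) p + b * px j du p + c * px j (lapx q) p := fun p j => by
    have h := hmom p j
    change pt (uf j) p - a * lapx (uf j) p - b * px j du p - c * px j (lapx q) p = G p j at h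
    linarith
  have hpt : ∀ x : Fin N → ℝ,
      pt (fun p : ℝ × (Fin N → ℝ) => ∑ i, px i q p * u p i) (t, x)
        = ∑ i, ((px i F (t, x) - px i du (t, x)) * uf i (t, x)
            + px i q (t, x) * (G (t, x) i + a * lapx (uf i) (t, x)
              + b * px i du (t, x) + c * px i (lapx q) (t, x))) := by
    intro x
    have h1 : HasDerivAt (fun s => ∑ i, px i q (s, x) * u (s, x) i)
        (∑ i, (pt (px i q) (t, x) * uf i (t, x) + px i q (t, x) * pt (uf i) (t, x))) t :=
      HasDerivAt.fun_sum fun i _ => (pt_slice (px_smooth hq i) t x).mul (pt_slice (huj i) t x)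
    have h2 : pt (fun p : ℝ × (Fin N → ℝ) => ∑ i, px i q p * u p i) (t, x)
        = ∑ i, (pt (px i q) (t, x) * uf i (t, x) + px i q (t, x) * pt (uf i) (t, x)) :=
      h1.deriv
    rw [h2]
    refine Finset.sum_congr rfl fun i _ => ?_
    rw [pt_px_comm hq i ((t, x) : ℝ × (Fin N → ℝ)), hptq,
      px_sub hF hdus i ((t, x) : ℝ × (Fin N → ℝ)), hptu ((t, x) : ℝ × (Fin N → ℝ)) i]
  -- integrable atoms
  have hI1 : ∀ i, Integrable (fun x : Fin N → ℝ => px i F (t, x) * uf i (t, x)) := fun i =>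
    hmulint _ _ (px_smooth hF i) (huj i) (px_support hK (fun y hy => sF t y hy) i)
  have hI2 : ∀ i, Integrable (fun x : Fin N → ℝ => px i du (t, x) * uf i (t, x)) := fun i =>
    hmulint _ _ (px_smooth hdus i) (huj i) (px_support hK sdu i)
  have hI3 : ∀ i, Integrable (fun x : Fin N → ℝ => px i q (t, x) * G (t, x) i) := fun i =>
    hmulint _ _ (px_smooth hq i) (hGj i) (spxq i)
  have hI4 : ∀ i k, Integrable
      (fun x : Fin N → ℝ => px i q (t, x) * px k (px k (uf i)) (t, x)) := fun i k =>
    hmulint _ _ (px_smooth hq i) (px_smooth (px_smooth (huj i) k) k) (spxq i)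
  have hIlap : ∀ i, Integrable (fun x : Fin N → ℝ => px i q (t, x) * lapx (uf i) (t, x)) :=
    fun i => hmulint _ _ (px_smooth hq i) (hlapu i) (spxq i)
  have hI5 : ∀ i, Integrable (fun x : Fin N → ℝ => px i q (t, x) * px i du (t, x)) := fun i =>
    hmulint _ _ (px_smooth hq i) (px_smooth hdus i) (spxq i)
  have hI6 : ∀ i, Integrable (fun x : Fin N → ℝ => px i q (t, x) * px i (lapx q) (t, x)) :=
    fun i => hmulint _ _ (px_smooth hq i) (px_smooth hLqs i) (spxq i)
  have hYI : ∀ i, Integrable (fun x : Fin N → ℝ => px i (uf i) (t, x) * du (t, x)) := fun i =>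
    hmulint _ _ (px_smooth (huj i) i) hdus (px_support hK (fun y hy => suj i t y hy) i)
  have hWI : ∀ i k, Integrable
      (fun x : Fin N → ℝ => px k (uf i) (t, x) * px k (px i q) (t, x)) := fun i k =>
    hmulint _ _ (px_smooth (huj i) k) (px_smooth (px_smooth hq i) k)
      (px_support hK (fun y hy => suj i t y hy) k)
  have hVI' : ∀ i, Integrable (fun x : Fin N → ℝ => px i (px i q) (t, x) * du (t, x)) := fun i =>
    hmulint _ _ (px_smooth (px_smooth hq i) i) hdus
      (px_support hK (spxq i) i)
  have hUI' : ∀ i, Integrable (fun x : Fin N → ℝ => px i (px i q) (t, x) * lapx q (t, x)) :=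
    fun i => hmulint _ _ (px_smooth (px_smooth hq i) i) hLqs (px_support hK (spxq i) i)
  have hA1I : ∀ i, Integrable (fun x : Fin N → ℝ => G (t, x) i * px i q (t, x)) := fun i =>
    hmulint _ _ (hGj i) (px_smooth hq i) (sGj i t)
  have hA3I : ∀ i, Integrable (fun x : Fin N → ℝ => uf i (t, x) * px i F (t, x)) := fun i =>
    hmulint _ _ (huj i) (px_smooth hF i) (suj i t)
  have hddI : Integrable (fun x : Fin N → ℝ => du (t, x) * du (t, x)) :=
    hmulint _ _ hdus hdus sdu
  have hLdI : Integrable (fun x : Fin N → ℝ => lapx q (t, x) * du (t, x)) :=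
    hmulint _ _ hLqs hdus sLq
  have hLLI : Integrable (fun x : Fin N → ℝ => lapx q (t, x) * lapx q (t, x)) :=
    hmulint _ _ hLqs hLqs sLq
  -- per-component integral identity (with integration by parts)
  have hJ : ∀ i : Fin N,
      (∫ x : Fin N → ℝ, (px i F (t, x) * uf i (t, x) - px i du (t, x) * uf i (t, x)
          + px i q (t, x) * G (t, x) i + a * (px i q (t, x) * lapx (uf i) (t, x))
          + b * (px i q (t, x) * px i du (t, x))
          + c * (px i q (t, x) * px i (lapx q) (t, x))))
        = (∫ x : Fin N → ℝ, uf i (t, x) * px i F (t, x))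
          + (∫ x : Fin N → ℝ, px i (uf i) (t, x) * du (t, x))
          + (∫ x : Fin N → ℝ, G (t, x) i * px i q (t, x))
          - a * (∑ k, ∫ x : Fin N → ℝ, px k (uf i) (t, x) * px k (px i q) (t, x))
          - b * (∫ x : Fin N → ℝ, px i (px i q) (t, x) * du (t, x))
          - c * (∫ x : Fin N → ℝ, px i (px i q) (t, x) * lapx q (t, x)) := by
    intro i
    have i4 : Integrable (fun x : Fin N → ℝ =>
        a * (px i q (t, x) * lapx (uf i) (t, x))) := (hIlap i).const_mul a
    have i5 : Integrable (fun x : Fin N → ℝ =>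
        b * (px i q (t, x) * px i du (t, x))) := (hI5 i).const_mul b
    have i6 : Integrable (fun x : Fin N → ℝ =>
        c * (px i q (t, x) * px i (lapx q) (t, x))) := (hI6 i).const_mul c
    have i12 : Integrable (fun x : Fin N → ℝ =>
        px i F (t, x) * uf i (t, x) - px i du (t, x) * uf i (t, x)) := (hI1 i).sub (hI2 i)
    have i123 : Integrable (fun x : Fin N → ℝ =>
        px i F (t, x) * uf i (t, x) - px i du (t, x) * uf i (t, x)
          + px i q (t, x) * G (t, x) i) := i12.add (hI3 i)
    have i1234 : Integrable (fun x : Fin N → ℝ =>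
        px i F (t, x) * uf i (t, x) - px i du (t, x) * uf i (t, x)
          + px i q (t, x) * G (t, x) i
          + a * (px i q (t, x) * lapx (uf i) (t, x))) := i123.add i4
    have i12345 : Integrable (fun x : Fin N → ℝ =>
        px i F (t, x) * uf i (t, x) - px i du (t, x) * uf i (t, x)
          + px i q (t, x) * G (t, x) i
          + a * (px i q (t, x) * lapx (uf i) (t, x))
          + b * (px i q (t, x) * px i du (t, x))) := i1234.add i5
    rw [integral_add i12345 i6, integral_add i1234 i5,
      integral_add i123 i4, integral_add i12 (hI3 i),
      integral_sub (hI1 i) (hI2 i), integral_const_mul, integral_const_mul, integral_const_mul]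
    have c1 : (∫ x : Fin N → ℝ, px i F (t, x) * uf i (t, x))
        = ∫ x : Fin N → ℝ, uf i (t, x) * px i F (t, x) := by
      rw [show (fun x : Fin N → ℝ => px i F (t, x) * uf i (t, x))
        = fun x => uf i (t, x) * px i F (t, x) from funext fun x => mul_comm _ _]
    have c3 : (∫ x : Fin N → ℝ, px i q (t, x) * G (t, x) i)
        = ∫ x : Fin N → ℝ, G (t, x) i * px i q (t, x) := by
      rw [show (fun x : Fin N → ℝ => px i q (t, x) * G (t, x) i)
        = fun x => G (t, x) i * px i q (t, x) from funext fun x => mul_comm _ _]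
    have c2 : (∫ x : Fin N → ℝ, px i du (t, x) * uf i (t, x))
        = -(∫ x : Fin N → ℝ, px i (uf i) (t, x) * du (t, x)) := by
      rw [show (fun x : Fin N → ℝ => px i du (t, x) * uf i (t, x))
        = fun x => uf i (t, x) * px i du (t, x) from funext fun x => mul_comm _ _]
      exact ibp hK (huj i) hdus t (fun y hy => suj i t y hy) i
    have c4k : ∀ k : Fin N, (∫ x : Fin N → ℝ, px i q (t, x) * px k (px k (uf i)) (t, x))
        = -(∫ x : Fin N → ℝ, px k (uf i) (t, x) * px k (px i q) (t, x)) := by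
      intro k
      rw [ibp hK (px_smooth hq i) (px_smooth (huj i) k) t (spxq i) k,
        show (fun x : Fin N → ℝ => px k (px i q) (t, x) * px k (uf i) (t, x))
          = fun x => px k (uf i) (t, x) * px k (px i q) (t, x) from funext fun x => mul_comm _ _]
    have c4 : (∫ x : Fin N → ℝ, px i q (t, x) * lapx (uf i) (t, x))
        = -(∑ k, ∫ x : Fin N → ℝ, px k (uf i) (t, x) * px k (px i q) (t, x)) := by
      rw [show (fun x : Fin N → ℝ => px i q (t, x) * lapx (uf i) (t, x))
          = fun x => ∑ k, px i q (t, x) * px k (px k (uf i)) (t, x) from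
          funext fun x => by
            show px i q (t, x) * (∑ k, px k (px k (uf i)) (t, x)) = _
            exact Finset.mul_sum _ _ _,
        integral_finset_sum _ (fun k _ => hI4 i k),
        Finset.sum_congr rfl (fun k _ => c4k k), Finset.sum_neg_distrib]
    have c5 : (∫ x : Fin N → ℝ, px i q (t, x) * px i du (t, x))
        = -(∫ x : Fin N → ℝ, px i (px i q) (t, x) * du (t, x)) :=
      ibp hK (px_smooth hq i) hdus t (spxq i) i
    have c6 : (∫ x : Fin N → ℝ, px i q (t, x) * px i (lapx q) (t, x))
        = -(∫ x : Fin N → ℝ, px i (px i q) (t, x) * lapx q (t, x)) :=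
      ibp hK (px_smooth hq i) hLqs t (spxq i) i
    rw [c1, c2, c3, c4, c5, c6]
    ring
  -- left-hand side as sum of atomic integrals
  have e0 : (fun x : Fin N → ℝ =>
        pt (fun p : ℝ × (Fin N → ℝ) => ∑ i, px i q p * u p i) (t, x))
      = fun x : Fin N → ℝ =>
        ∑ i, (px i F (t, x) * uf i (t, x) - px i du (t, x) * uf i (t, x)
          + px i q (t, x) * G (t, x) i + a * (px i q (t, x) * lapx (uf i) (t, x))
          + b * (px i q (t, x) * px i du (t, x))
          + c * (px i q (t, x) * px i (lapx q) (t, x))) :=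
    funext fun x => (hpt x).trans (Finset.sum_congr rfl fun i _ => by ring)
  have hterm : ∀ i : Fin N, Integrable (fun x : Fin N → ℝ =>
      px i F (t, x) * uf i (t, x) - px i du (t, x) * uf i (t, x)
        + px i q (t, x) * G (t, x) i + a * (px i q (t, x) * lapx (uf i) (t, x))
        + b * (px i q (t, x) * px i du (t, x))
        + c * (px i q (t, x) * px i (lapx q) (t, x))) := fun i =>
    (((((hI1 i).sub (hI2 i)).add (hI3 i)).add ((hIlap i).const_mul a)).add
      ((hI5 i).const_mul b)).add ((hI6 i).const_mul c)
  have hYsum : (∑ i, ∫ x : Fin N → ℝ, px i (uf i) (t, x) * du (t, x))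
      = ∫ x : Fin N → ℝ, du (t, x) * du (t, x) := by
    rw [← integral_finset_sum _ (fun i _ => hYI i)]
    congr 1
    funext x
    rw [← Finset.sum_mul]
  have hVsum : (∑ i, ∫ x : Fin N → ℝ, px i (px i q) (t, x) * du (t, x))
      = ∫ x : Fin N → ℝ, lapx q (t, x) * du (t, x) := by
    rw [← integral_finset_sum _ (fun i _ => hVI' i)]
    congr 1
    funext x
    rw [← Finset.sum_mul]
    rfl
  have hUsum : (∑ i, ∫ x : Fin N → ℝ, px i (px i q) (t, x) * lapx q (t, x))
      = ∫ x : Fin N → ℝ, lapx q (t, x) * lapx q (t, x) := by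
    rw [← integral_finset_sum _ (fun i _ => hUI' i)]
    congr 1
    funext x
    rw [← Finset.sum_mul]
    rfl
  -- right-hand side as the same atomic integrals
  have hDval : ((∫ x : Fin N → ℝ,
        ((∑ j, G (t, x) j * px j q (t, x))
          + (∑ i, px i (fun r => u r i) (t, x)) ^ 2
          + ∑ i, u (t, x) i * px i F (t, x)
          - a * ∑ i, ∑ j, px i (fun r => u r j) (t, x) * px i (px j q) (t, x)
          - b * lapx q (t, x) * ∑ i, px i (fun r => u r i) (t, x)))
      - c * ∫ x : Fin N → ℝ, (lapx q (t, x)) ^ 2)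
      = (∑ i, ∫ x : Fin N → ℝ, G (t, x) i * px i q (t, x))
        + (∫ x : Fin N → ℝ, du (t, x) * du (t, x))
        + (∑ i, ∫ x : Fin N → ℝ, uf i (t, x) * px i F (t, x))
        - a * (∑ i, ∑ j, ∫ x : Fin N → ℝ, px i (uf j) (t, x) * px i (px j q) (t, x))
        - b * (∫ x : Fin N → ℝ, lapx q (t, x) * du (t, x))
        - c * (∫ x : Fin N → ℝ, lapx q (t, x) * lapx q (t, x)) := by
    have eBig : (fun x : Fin N → ℝ =>
          ((∑ j, G (t, x) j * px j q (t, x))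
            + (∑ i, px i (fun r => u r i) (t, x)) ^ 2
            + ∑ i, u (t, x) i * px i F (t, x)
            - a * ∑ i, ∑ j, px i (fun r => u r j) (t, x) * px i (px j q) (t, x)
            - b * lapx q (t, x) * ∑ i, px i (fun r => u r i) (t, x)))
        = fun x : Fin N → ℝ =>
          (∑ j, G (t, x) j * px j q (t, x)) + du (t, x) * du (t, x)
            + (∑ i, uf i (t, x) * px i F (t, x))
            - a * (∑ i, ∑ j, px i (uf j) (t, x) * px i (px j q) (t, x))
            - b * (lapx q (t, x) * du (t, x)) := funext fun x => by
      show (∑ j, G (t, x) j * px j q (t, x)) + (du (t, x)) ^ 2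
          + (∑ i, uf i (t, x) * px i F (t, x))
          - a * ∑ i, ∑ j, px i (uf j) (t, x) * px i (px j q) (t, x)
          - b * lapx q (t, x) * du (t, x) = _
      ring
    have eLq : (fun x : Fin N → ℝ => (lapx q (t, x)) ^ 2)
        = fun x : Fin N → ℝ => lapx q (t, x) * lapx q (t, x) :=
      funext fun x => pow_two _
    have g1I : Integrable (fun x : Fin N → ℝ => ∑ j, G (t, x) j * px j q (t, x)) :=
      integrable_finset_sum _ fun j _ => hA1I j
    have g3I : Integrable (fun x : Fin N → ℝ => ∑ i, uf i (t, x) * px i F (t, x)) :=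
      integrable_finset_sum _ fun i _ => hA3I i
    have g4I : Integrable (fun x : Fin N → ℝ =>
        ∑ i, ∑ j, px i (uf j) (t, x) * px i (px j q) (t, x)) :=
      integrable_finset_sum _ fun i _ => integrable_finset_sum _ fun j _ => hWI j i
    have g12 : Integrable (fun x : Fin N → ℝ =>
        (∑ j, G (t, x) j * px j q (t, x)) + du (t, x) * du (t, x)) := g1I.add hddI
    have g123 : Integrable (fun x : Fin N → ℝ =>
        (∑ j, G (t, x) j * px j q (t, x)) + du (t, x) * du (t, x)
          + (∑ i, uf i (t, x) * px i F (t, x))) := g12.add g3I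
    have g1234 : Integrable (fun x : Fin N → ℝ =>
        (∑ j, G (t, x) j * px j q (t, x)) + du (t, x) * du (t, x)
          + (∑ i, uf i (t, x) * px i F (t, x))
          - a * (∑ i, ∑ j, px i (uf j) (t, x) * px i (px j q) (t, x))) :=
      g123.sub (g4I.const_mul a)
    rw [eBig, eLq, integral_sub g1234 (hLdI.const_mul b),
      integral_sub g123 (g4I.const_mul a), integral_add g12 g3I, integral_add g1I hddI,
      integral_const_mul, integral_const_mul,
      integral_finset_sum _ (fun j _ => hA1I j), integral_finset_sum _ (fun i _ => hA3I i),
      integral_finset_sum _ (fun i _ =>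
        (integrable_finset_sum _ fun j _ => hWI j i : Integrable (fun x : Fin N → ℝ =>
          ∑ j, px i (uf j) (t, x) * px i (px j q) (t, x)))),
      Finset.sum_congr rfl (fun i (_ : i ∈ Finset.univ) =>
        integral_finset_sum Finset.univ (fun j _ => hWI j i))]
  -- conclude
  have hcalc : (∫ x : Fin N → ℝ,
        pt (fun p : ℝ × (Fin N → ℝ) => ∑ i, px i q p * u p i) (t, x))
      = ((∫ x : Fin N → ℝ,
            ((∑ j, G (t, x) j * px j q (t, x))
              + (∑ i, px i (fun r => u r i) (t, x)) ^ 2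
              + ∑ i, u (t, x) i * px i F (t, x)
              - a * ∑ i, ∑ j, px i (fun r => u r j) (t, x) * px i (px j q) (t, x)
              - b * lapx q (t, x) * ∑ i, px i (fun r => u r i) (t, x)))
          - c * ∫ x : Fin N → ℝ, (lapx q (t, x)) ^ 2) := by
    rw [e0, integral_finset_sum _ (fun i _ => hterm i),
      Finset.sum_congr rfl (fun i (_ : i ∈ Finset.univ) => hJ i), hDval]
    simp only [Finset.sum_add_distrib, Finset.sum_sub_distrib, ← Finset.mul_sum]
    rw [hYsum, hVsum, hUsum, Finset.sum_comm]
    ring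
  exact hcalc ▸ hder
end
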